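/- arXiv:1312.1137 — 5 statements merged into one kernel-verified Lean document; each statement's English description precedes it below -/
import Mathlib

section
/- Let F be a probability distribution function on the reals and for times 0 ≤ t_1 ≤ ... ≤ t_l define F_{t_1,...,t_l}(x_1,...,x_l) = F^{t_1}(min(x_1,...,x_l)) · F^{t_2-t_1}(min(x_2,...,x_l)) ··· F^{t_l-t_{l-1}}(x_l). Then this family of finite dimensional distributions is consistent: integrating out (taking x_i → ∞ in) any coordinate yields the corresponding lower-dimensional distribution of the same form. -/
/-!
Once `y` exceeds every `x_j`, replacing `x_k` by `y` leaves the suffix minima of the remaining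
coordinates unchanged and makes the `k`-th suffix minimum equal to the `(k+1)`-th. The factors
`k` and `k+1` then share their base and merge into one factor with exponent `t_{k+1} - t_{k-1}`,
the increment of the thinned time vector, so the function is eventually constant. For the last
coordinate the extra factor is `F(y)^{t_l - t_{l-1}}`, which tends to `1`.
-/

open Filter Finset

/-- The finite-dimensional distribution function of an `F`-extremal process:
`F_{t_1,…,t_l}(x_1,…,x_l) = ∏_i F(min_{j ≥ i} x_j)^{t_i - t_{i-1}}` (with `t_0 = 0`). -/
noncomputable def extremalFdd (F : ℝ → ℝ) (l : ℕ) (t x : Fin l → ℝ) : ℝ :=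
  ∏ i : Fin l,
    (F ((Finset.Ici i).inf' ⟨i, Finset.mem_Ici.mpr le_rfl⟩ x)) ^
      (t i - if (i : ℕ) = 0 then 0 else t ⟨i.1 - 1, Nat.lt_of_le_of_lt (Nat.sub_le i.1 1) i.isLt⟩)

noncomputable def suffixMin {l : ℕ} (x : Fin l → ℝ) (i : Fin l) : ℝ :=
  (Ici i).inf' nonempty_Ici x

def increment {l : ℕ} (t : Fin l → ℝ) (i : Fin l) : ℝ :=
  t i - if (i : ℕ) = 0 then 0 else t ⟨i.1 - 1, Nat.lt_of_le_of_lt (Nat.sub_le i.1 1) i.isLt⟩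

lemma extremalFdd_eq_prod (F : ℝ → ℝ) (l : ℕ) (t x : Fin l → ℝ) :
    extremalFdd F l t x = ∏ i, F (suffixMin x i) ^ increment t i :=
  rfl

lemma Finset.inf'_update_of_forall_le {ι α : Type*} [DecidableEq ι] [SemilatticeInf α]
    {s : Finset ι} {f : ι → α} {k : ι} {a : α} (ha : ∀ i, f i ≤ a)
    (hs : (s.erase k).Nonempty) :
    s.inf' (hs.mono (erase_subset k s)) (Function.update f k a) = (s.erase k).inf' hs f := by
  refine le_antisymm (le_inf' _ _ fun j hj => ?_) (le_inf' _ _ fun j hj => ?_)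
  · simpa [Function.update_of_ne (ne_of_mem_erase hj)]
      using inf'_le (Function.update f k a) (mem_of_mem_erase hj)
  · obtain rfl | hjk := eq_or_ne j k
    · obtain ⟨i, hi⟩ := hs
      simpa using (inf'_le f hi).trans (ha i)
    · simpa [Function.update_of_ne hjk] using inf'_le f (mem_erase.2 ⟨hjk, hj⟩)

lemma Fin.image_succAbove_Ici {m : ℕ} (k : Fin (m + 1)) (i : Fin m) :
    (Ici i).image k.succAbove = (Ici (k.succAbove i)).erase k := by
  ext j
  simp only [mem_image, mem_Ici, mem_erase]
  constructor
  · rintro ⟨j, hij, rfl⟩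
    exact ⟨succAbove_ne _ _, succAbove_le_succAbove_iff.2 hij⟩
  · rintro ⟨hjk, hij⟩
    obtain ⟨j, rfl⟩ := exists_succAbove_eq hjk
    exact ⟨j, succAbove_le_succAbove_iff.1 hij, rfl⟩

section suffixMin

variable {m : ℕ} {x : Fin (m + 1) → ℝ} {y : ℝ}

lemma suffixMin_update_of_erase_eq_image (hy : ∀ j, x j ≤ y) {k i : Fin (m + 1)} {i' : Fin m}
    (h : (Ici i).erase k = (Ici i').image k.succAbove) :
    suffixMin (Function.update x k y) i = suffixMin (x ∘ k.succAbove) i' := by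
  have hne : ((Ici i).erase k).Nonempty := h ▸ nonempty_Ici.image _
  rw [suffixMin, inf'_update_of_forall_le hy hne, inf'_congr hne h fun _ _ => rfl, inf'_image]
  rfl

lemma suffixMin_update_succAbove (hy : ∀ j, x j ≤ y) (k : Fin (m + 1)) (i : Fin m) :
    suffixMin (Function.update x k y) (k.succAbove i) = suffixMin (x ∘ k.succAbove) i :=
  suffixMin_update_of_erase_eq_image hy (Fin.image_succAbove_Ici k i).symm

lemma suffixMin_update_castSucc_self (hy : ∀ j, x j ≤ y) (k : Fin m) :
    suffixMin (Function.update x k.castSucc y) k.castSucc =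
      suffixMin (x ∘ k.castSucc.succAbove) k := by
  refine suffixMin_update_of_erase_eq_image hy ?_
  rw [Fin.image_succAbove_Ici, Fin.succAbove_castSucc_self]
  ext j
  simp only [mem_erase, mem_Ici, ne_eq, Fin.le_def, Fin.ext_iff, Fin.val_succ, Fin.val_castSucc]
  omega

end suffixMin

lemma Fin.val_succAbove_eq {m : ℕ} (k : Fin (m + 1)) (i : Fin m) :
    (k.succAbove i : ℕ) = if (i : ℕ) < k then (i : ℕ) else i + 1 := by
  rcases lt_or_ge i.castSucc k with h | h
  · have hik : (i : ℕ) < k := h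
    rw [Fin.succAbove_of_castSucc_lt _ _ h, if_pos hik, Fin.val_castSucc]
  · have hki : (k : ℕ) ≤ i := h
    rw [Fin.succAbove_of_le_castSucc _ _ h, if_neg (not_lt.2 hki), Fin.val_succ]

section increment

variable {m : ℕ} (t : Fin (m + 1) → ℝ)

lemma increment_comp_succAbove {k : Fin (m + 1)} {i : Fin m} (h : i.castSucc ≠ k) :
    increment (t ∘ k.succAbove) i = increment t (k.succAbove i) := by
  have hik : (i : ℕ) ≠ k := fun h' => h (Fin.ext h')
  simp only [increment, Function.comp_apply]
  congr 1
  split_ifs with h1 h2 h2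
  · rfl
  · simp only [Fin.val_succAbove_eq] at h2; split_ifs at h2 <;> omega
  · simp only [Fin.val_succAbove_eq] at h2; split_ifs at h2; omega
  · congr 1; ext; simp only [Fin.val_succAbove_eq]; split_ifs <;> omega

lemma increment_comp_succAbove_castSucc_self (k : Fin m) :
    increment (t ∘ k.castSucc.succAbove) k = increment t k.castSucc + increment t k.succ := by
  simp only [increment, Function.comp_apply, Fin.succAbove_castSucc_self, Fin.val_succ,
    Fin.val_castSucc, Nat.add_one_ne_zero, if_false]
  have hprev : t ⟨(k : ℕ) + 1 - 1, by omega⟩ = t k.castSucc := congrArg t (Fin.ext (by simp))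
  rw [hprev]
  split_ifs with h0
  · ring
  · have hprev' : t (k.castSucc.succAbove ⟨(k : ℕ) - 1, by omega⟩) =
        t ⟨(k : ℕ) - 1, by omega⟩ := by
      congr 1; ext; simp only [Fin.val_succAbove_eq, Fin.val_castSucc]; split_ifs <;> omega
    rw [hprev']; ring

lemma increment_nonneg (ht0 : ∀ i, 0 ≤ t i) (ht : Monotone t) (i : Fin (m + 1)) :
    0 ≤ increment t i := by
  rw [increment, sub_nonneg]
  split_ifs
  · exact ht0 i
  · exact ht (Fin.le_def.2 (Nat.sub_le _ _))

end increment

lemma Fin.prod_univ_eq_of_merge {M : Type*} [CommMonoid M] {m : ℕ} (k : Fin m)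
    {f : Fin (m + 1) → M} {g : Fin m → M} (hk : f k.castSucc * f k.succ = g k)
    (hne : ∀ i ≠ k, f (k.castSucc.succAbove i) = g i) : ∏ i, f i = ∏ i, g i := by
  rw [Fin.prod_univ_succAbove f k.castSucc, ← mul_prod_erase univ _ (mem_univ k),
    ← mul_prod_erase univ g (mem_univ k), Fin.succAbove_castSucc_self, ← mul_assoc, hk]
  exact congrArg (g k * ·) (prod_congr rfl fun i hi => hne i (ne_of_mem_erase hi))

section update

variable {F : ℝ → ℝ} {m : ℕ} {t x : Fin (m + 1) → ℝ} {y : ℝ}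

lemma extremalFdd_update_last (hy : ∀ j, x j ≤ y) :
    extremalFdd F (m + 1) t (Function.update x (Fin.last m) y) =
      extremalFdd F m (t ∘ (Fin.last m).succAbove) (x ∘ (Fin.last m).succAbove) *
        F y ^ increment t (Fin.last m) := by
  have hlast : suffixMin (Function.update x (Fin.last m) y) (Fin.last m) = y := by
    simp [suffixMin, ← Fin.top_eq_last, Ici_top]
  rw [extremalFdd_eq_prod, extremalFdd_eq_prod, Fin.prod_univ_castSucc, hlast]
  refine congrArg (· * _) (prod_congr rfl fun i _ => ?_)
  rw [← Fin.succAbove_last, suffixMin_update_succAbove hy,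
    increment_comp_succAbove t (Fin.castSucc_lt_last i).ne]

lemma extremalFdd_update_castSucc (hF : ∀ z, 0 ≤ F z) (ht0 : ∀ i, 0 ≤ t i) (ht : Monotone t)
    (hy : ∀ j, x j ≤ y) (k : Fin m) :
    extremalFdd F (m + 1) t (Function.update x k.castSucc y) =
      extremalFdd F m (t ∘ k.castSucc.succAbove) (x ∘ k.castSucc.succAbove) := by
  rw [extremalFdd_eq_prod, extremalFdd_eq_prod]
  -- `F` may vanish and `0 ^ a = 0` for `a < 0`, so merging the powers needs nonnegative exponents.
  refine Fin.prod_univ_eq_of_merge k ?_ fun i hik => ?_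
  · rw [suffixMin_update_castSucc_self hy, ← Fin.succAbove_castSucc_self,
      suffixMin_update_succAbove hy, increment_comp_succAbove_castSucc_self,
      Real.rpow_add_of_nonneg (hF _) (increment_nonneg t ht0 ht _) (increment_nonneg t ht0 ht _),
      Fin.succAbove_castSucc_self]
  · rw [suffixMin_update_succAbove hy,
      increment_comp_succAbove t (fun h => hik (Fin.castSucc_injective _ h))]

end update

theorem extremalFdd_consistent_general (F : ℝ → ℝ)
    (h01 : ∀ y, 0 ≤ F y ∧ F y ≤ 1)
    (htop : Tendsto F atTop (nhds 1))
    (m : ℕ) (t x : Fin (m + 1) → ℝ) (ht0 : ∀ i, 0 ≤ t i) (htmono : Monotone t)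
    (k : Fin (m + 1)) :
    Tendsto (fun y => extremalFdd F (m + 1) t (Function.update x k y)) atTop
      (nhds (extremalFdd F m (t ∘ k.succAbove) (x ∘ k.succAbove))) := by
  have hlarge : ∀ᶠ y in atTop, ∀ j, x j ≤ y :=
    eventually_all.2 fun j => eventually_ge_atTop (x j)
  induction k using Fin.lastCases with
  | last =>
    have hpow := htop.rpow_const (p := increment t (Fin.last m)) (Or.inl one_ne_zero)
    rw [Real.one_rpow] at hpow
    simpa using (tendsto_const_nhds.mul hpow).congr'
      (hlarge.mono fun y hy => (extremalFdd_update_last hy).symm)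
  | cast k =>
    exact tendsto_const_nhds.congr' (hlarge.mono fun y hy =>
      (extremalFdd_update_castSucc (fun z => (h01 z).1) ht0 htmono hy k).symm)

/-- Consistency of the family of finite-dimensional distributions: letting any one
coordinate tend to `+∞` yields the corresponding lower-dimensional distribution. -/
theorem extremalFdd_consistent (F : ℝ → ℝ) (hmono : Monotone F)
    (h01 : ∀ y, 0 ≤ F y ∧ F y ≤ 1)
    (htop : Tendsto F atTop (nhds 1)) (hbot : Tendsto F atBot (nhds 0))
    (hrc : ∀ y, ContinuousWithinAt F (Set.Ici y) y)
    (m : ℕ) (t x : Fin (m + 1) → ℝ) (ht0 : ∀ i, 0 ≤ t i) (htmono : Monotone t)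
    (k : Fin (m + 1)) :
    Tendsto (fun y => extremalFdd F (m + 1) t (Function.update x k y)) atTop
      (nhds (extremalFdd F m (t ∘ k.succAbove) (x ∘ k.succAbove))) :=
  extremalFdd_consistent_general F h01 htop m t x ht0 htmono k
end

section
/- Let (σ_i)_{i≥1} be i.i.d. random variables with P(σ_1 ≥ u) = ρ_u^M / ρ_ε^M for ε ≤ u ≤ M, where ρ_a^b = 1/a - 1/b. Let R = { max_{i=1..j} σ_i : j ≥ 1 } be the set of record values. Then for ε < a < b < M, P(R ∩ [a,b] = ∅) = ρ_b^M / ρ_a^M = (1/b - 1/M)/(1/a - 1/M). -/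
/-!
The running maximum avoids `[a, b]` exactly when the sequence stays below `a` forever, or leaves
`(-∞, a)` for the first time by jumping above `b`. With `q = P(σ < a) < 1` the first event is
null, and by independence the second one happens at step `j` with probability `p * q ^ j`, where
`p = P(σ > b)`. Summing the geometric series gives `p / (1 - q) = P(σ > b) / P(σ ≥ a)`, and since
the survival function is continuous, `P(σ > b) = P(σ ≥ b) = ρ_b^M / ρ_ε^M`.
-/

open Filter MeasureTheory Set
open scoped ProbabilityTheory Topology

open Finset in
theorem forall_sup'_range_notMem_Icc_iff {α : Type*} [LinearOrder α] {x : ℕ → α} {a b : α} :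
    (∀ j, (range (j + 1)).sup' nonempty_range_add_one x ∉ Icc a b) ↔
      (∀ i, x i < a) ∨ ∃ j, b < x j ∧ ∀ i < j, x i < a := by
  constructor
  · intro h
    by_cases hall : ∀ i, x i < a
    · exact .inl hall
    simp only [not_forall, not_lt] at hall
    classical
    let j := Nat.find hall
    have hbefore : ∀ i < j, x i < a := fun i hi => not_le.1 (Nat.find_min hall hi)
    refine .inr ⟨j, not_le.1 fun hjb => h j ⟨?_, ?_⟩, hbefore⟩
    · exact (Nat.find_spec hall).trans (le_sup' x (self_mem_range_succ j))
    · refine sup'_le _ _ fun i hi => ?_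
      rcases (Nat.lt_succ_iff.1 (mem_range.1 hi)).lt_or_eq with hij | rfl
      · exact ((hbefore i hij).trans_le (Nat.find_spec hall)).le.trans hjb
      · exact hjb
  · rintro (hall | ⟨j, hbj, hbefore⟩) k ⟨hak, hkb⟩
    · exact hak.not_gt ((sup'_lt_iff _).2 fun i _ => hall i)
    · rcases lt_or_ge k j with hkj | hjk
      · refine hak.not_gt ((sup'_lt_iff _).2 fun i hi => hbefore i ?_)
        exact (Nat.lt_succ_iff.1 (mem_range.1 hi)).trans_lt hkj
      · exact hkb.not_gt (hbj.trans_le (le_sup' x (mem_range.2 (Nat.lt_succ_of_le hjk))))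

theorem measure_preimage_Ioi_of_tendsto {Ω α : Type*} {mΩ : MeasurableSpace Ω} {μ : Measure Ω}
    [ConditionallyCompleteLinearOrder α] [TopologicalSpace α] [OrderTopology α]
    [DenselyOrdered α] [FirstCountableTopology α] {X : Ω → α} {f : α → ENNReal} {b c : α}
    {L : ENNReal} (hbc : b < c) (hf : ∀ u ∈ Ioo b c, μ (X ⁻¹' Ici u) = f u)
    (hL : Tendsto f (𝓝[>] b) (𝓝 L)) : μ (X ⁻¹' Ioi b) = L := by
  obtain ⟨u, hanti, hmem, hlim⟩ := exists_seq_strictAnti_tendsto' hbc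
  have hunion : ⋃ n, X ⁻¹' Ici (u n) = X ⁻¹' Ioi b := by
    rw [← preimage_iUnion, iUnion_Ici_eq_Ioi_of_lt_of_tendsto (fun n => (hmem n).1) hlim]
  have hmono : Monotone fun n => X ⁻¹' Ici (u n) := fun m n hmn =>
    preimage_mono (Ici_subset_Ici.2 (hanti.antitone hmn))
  have hu : Tendsto u atTop (𝓝[>] b) :=
    tendsto_nhdsWithin_iff.2 ⟨hlim, .of_forall fun n => (hmem n).1⟩
  refine tendsto_nhds_unique (hunion ▸ tendsto_measure_iUnion_atTop hmono) ?_
  exact (hL.comp hu).congr fun n => (hf _ (hmem n)).symm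

namespace ProbabilityTheory.iIndepFun

variable {Ω β : Type*} {mΩ : MeasurableSpace Ω} {mβ : MeasurableSpace β} {μ : Measure Ω}
  {σ : ℕ → Ω → β} {S T : Set β}

open Finset in
theorem measure_forall_lt_mem (hσ : iIndepFun σ μ) (hS : MeasurableSet S) (n : ℕ) :
    μ {ω | ∀ i < n, σ i ω ∈ S} = ∏ i ∈ range n, μ (σ i ⁻¹' S) := by
  rw [← hσ.measure_inter_preimage_eq_mul (range n) (sets := fun _ => S) fun _ _ => hS]
  congr 1
  ext ω
  simp

open Finset in
theorem measure_mem_and_forall_lt_mem (hσ : iIndepFun σ μ) (hS : MeasurableSet S)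
    (hT : MeasurableSet T) (j : ℕ) :
    μ {ω | σ j ω ∈ T ∧ ∀ i < j, σ i ω ∈ S} = μ (σ j ⁻¹' T) * ∏ i ∈ range j, μ (σ i ⁻¹' S) := by
  have hsets : ∀ i ∈ range (j + 1), MeasurableSet (Function.update (fun _ => S) j T i) :=
    fun i _ => by rcases eq_or_ne i j with rfl | hij <;> simp [*]
  have hprod := hσ.measure_inter_preimage_eq_mul (range (j + 1)) hsets
  rw [range_add_one, set_biInter_insert, prod_insert notMem_range_self] at hprod
  have hbefore : ∀ i ∈ range j, Function.update (fun _ => S) j T i = S :=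
    fun i hi => Function.update_of_ne (mem_range.1 hi).ne _ _
  rw [Function.update_self, prod_congr rfl fun i hi => by rw [hbefore i hi],
    iInter₂_congr fun i hi => by rw [hbefore i hi]] at hprod
  rw [← hprod]
  congr 1
  ext ω
  simp

theorem measure_forall_mem_eq_zero (hσ : iIndepFun σ μ) (hS : MeasurableSet S) {q : ENNReal}
    (hq : ∀ i, μ (σ i ⁻¹' S) = q) (hq1 : q < 1) : μ {ω | ∀ i, σ i ω ∈ S} = 0 := by
  refine le_antisymm (ge_of_tendsto' (ENNReal.tendsto_pow_atTop_nhds_zero_of_lt_one hq1)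
    fun n => ?_) zero_le
  calc μ {ω | ∀ i, σ i ω ∈ S} ≤ μ {ω | ∀ i < n, σ i ω ∈ S} := measure_mono fun ω h i _ => h i
    _ = q ^ n := by simp [hσ.measure_forall_lt_mem hS, hq]

theorem measure_exists_mem_and_forall_lt_mem (hσ : iIndepFun σ μ) (hmeas : ∀ i, Measurable (σ i))
    (hS : MeasurableSet S) (hT : MeasurableSet T) (hST : Disjoint S T) {p q : ENNReal}
    (hp : ∀ i, μ (σ i ⁻¹' T) = p) (hq : ∀ i, μ (σ i ⁻¹' S) = q) :
    μ {ω | ∃ j, σ j ω ∈ T ∧ ∀ i < j, σ i ω ∈ S} = p / (1 - q) := by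
  have hdisj : Pairwise (Function.onFun Disjoint fun j => {ω | σ j ω ∈ T ∧ ∀ i < j, σ i ω ∈ S}) :=
    (pairwise_disjoint_on _).2 fun j k hjk => Set.disjoint_left.2 fun ω hj hk =>
      hST.notMem_of_mem_right hj.1 (hk.2 j hjk)
  have hmeasB : ∀ j, MeasurableSet {ω | σ j ω ∈ T ∧ ∀ i < j, σ i ω ∈ S} := fun j => by
    simp only [ofPred_and, ofPred_forall]
    exact (hmeas j hT).inter (.iInter fun i => .iInter fun _ => hmeas i hS)
  rw [ofPred_exists, measure_iUnion hdisj hmeasB]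
  simp only [hσ.measure_mem_and_forall_lt_mem hS hT, hp, hq, Finset.prod_const, Finset.card_range]
  rw [ENNReal.tsum_mul_left, ENNReal.tsum_geometric, div_eq_mul_inv]

theorem measure_forall_mem_or_exists_mem_and_forall_lt_mem (hσ : iIndepFun σ μ)
    (hmeas : ∀ i, Measurable (σ i)) (hS : MeasurableSet S) (hT : MeasurableSet T)
    (hST : Disjoint S T) {p q : ENNReal} (hp : ∀ i, μ (σ i ⁻¹' T) = p)
    (hq : ∀ i, μ (σ i ⁻¹' S) = q) (hq1 : q < 1) :
    μ {ω | (∀ i, σ i ω ∈ S) ∨ ∃ j, σ j ω ∈ T ∧ ∀ i < j, σ i ω ∈ S} = p / (1 - q) := by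
  rw [ofPred_or, measure_congr (union_ae_eq_right_of_ae_eq_empty
    (ae_eq_empty.2 (hσ.measure_forall_mem_eq_zero hS hq hq1)))]
  exact hσ.measure_exists_mem_and_forall_lt_mem hmeas hS hT hST hp hq

end ProbabilityTheory.iIndepFun

theorem record_avoidance_prob_general {Ω : Type*} [MeasureSpace Ω]
    [IsProbabilityMeasure (ℙ : Measure Ω)]
    (ε M a b : ℝ) (hε : 0 < ε) (hεa : ε < a) (hab : a < b) (hbM : b < M)
    (σ : ℕ → Ω → ℝ) (hmeas : ∀ i, Measurable (σ i))
    (hindep : ProbabilityTheory.iIndepFun σ ℙ)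
    (hident : ∀ i, ProbabilityTheory.IdentDistrib (σ i) (σ 0) ℙ ℙ)
    (hsurv : ∀ u, ε ≤ u → u ≤ M →
      ℙ {ω | u ≤ σ 0 ω} = ENNReal.ofReal ((1 / u - 1 / M) / (1 / ε - 1 / M))) :
    ℙ {ω | ∀ j : ℕ,
        ((Finset.range (j + 1)).sup' Finset.nonempty_range_add_one fun i => σ i ω)
          ∉ Set.Icc a b}
      = ENNReal.ofReal ((1 / b - 1 / M) / (1 / a - 1 / M)) := by
  set F : ℝ → ℝ := fun u => (1 / u - 1 / M) / (1 / ε - 1 / M)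
  have hρ_pos : ∀ {x}, 0 < x → x < M → 0 < 1 / x - 1 / M := fun hx hxM =>
    sub_pos.2 (one_div_lt_one_div_of_lt hx hxM)
  have hεM : 0 < 1 / ε - 1 / M := hρ_pos hε (by linarith)
  have hFa_pos : 0 < F a := div_pos (hρ_pos (by linarith) (by linarith)) hεM
  have hFa_le : F a ≤ 1 := by
    rw [div_le_one hεM, sub_le_sub_iff_right]
    exact one_div_le_one_div_of_le hε hεa.le
  have hq : ∀ i, ℙ (σ i ⁻¹' Iio a) = 1 - ENNReal.ofReal (F a) := fun i => by
    rw [(hident i).measure_mem_eq measurableSet_Iio, ← compl_Ici, preimage_compl,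
      prob_compl_eq_one_sub (hmeas 0 measurableSet_Ici)]
    exact congrArg _ (hsurv a hεa.le (by linarith))
  have hp : ∀ i, ℙ (σ i ⁻¹' Ioi b) = ENNReal.ofReal (F b) := fun i => by
    rw [(hident i).measure_mem_eq measurableSet_Ioi]
    refine measure_preimage_Ioi_of_tendsto hbM
      (fun u hu => hsurv u (by linarith [hu.1]) hu.2.le) ?_
    refine (ENNReal.continuous_ofReal.continuousAt.comp ?_).tendsto.mono_left nhdsWithin_le_nhds
    have hb : b ≠ 0 := (hε.trans (hεa.trans hab)).ne'
    exact ((continuousAt_const.div continuousAt_id hb).sub continuousAt_const).div_const _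
  have hq1 : 1 - ENNReal.ofReal (F a) < 1 :=
    ENNReal.sub_lt_self ENNReal.one_ne_top one_ne_zero (ENNReal.ofReal_pos.2 hFa_pos).ne'
  simp_rw [forall_sup'_range_notMem_Icc_iff]
  refine (hindep.measure_forall_mem_or_exists_mem_and_forall_lt_mem hmeas measurableSet_Iio
    measurableSet_Ioi ((Iic_disjoint_Ioi hab.le).mono_left Iio_subset_Iic_self) hp hq hq1).trans ?_
  rw [ENNReal.sub_sub_cancel ENNReal.one_ne_top (ENNReal.ofReal_le_one.2 hFa_le),
    ← ENNReal.ofReal_div_of_pos hFa_pos, div_div_div_cancel_right₀ hεM.ne']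

/-- For i.i.d. `σ_i` with survival function `P(σ_1 ≥ u) = ρ_u^M / ρ_ε^M` on `[ε, M]`
(where `ρ_a^b = 1/a - 1/b`), the set of running-maximum record values avoids an
interval `[a,b] ⊆ (ε, M)` with probability `ρ_b^M / ρ_a^M`. -/
theorem record_avoidance_prob {Ω : Type*} [MeasureSpace Ω]
    [IsProbabilityMeasure (ℙ : Measure Ω)]
    (ε M a b : ℝ) (hε : 0 < ε) (hεa : ε < a) (hab : a < b) (hbM : b < M)
    (σ : ℕ → Ω → ℝ) (hmeas : ∀ i, Measurable (σ i))
    (hindep : ProbabilityTheory.iIndepFun σ ℙ)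
    (hident : ∀ i, ProbabilityTheory.IdentDistrib (σ i) (σ 0) ℙ ℙ)
    (hrange : ∀ i ω, σ i ω ∈ Set.Icc ε M)
    (hsurv : ∀ u, ε ≤ u → u ≤ M →
      ℙ {ω | u ≤ σ 0 ω} = ENNReal.ofReal ((1 / u - 1 / M) / (1 / ε - 1 / M))) :
    ℙ {ω | ∀ j : ℕ,
        ((Finset.range (j + 1)).sup' Finset.nonempty_range_add_one fun i => σ i ω)
          ∉ Set.Icc a b}
      = ENNReal.ofReal ((1 / b - 1 / M) / (1 / a - 1 / M)) :=
  record_avoidance_prob_general ε M a b hε hεa hab hbM σ hmeas hindep hident hsurv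
end

section
/- Let Z be a standard Gaussian random variable, and let (α_n), (β_n) be positive sequences with α_n β_n √n → ∞. Set g_n = exp(α_n β_n² n) and b_n^{-1} = α_n β_n √(2πn) · exp(α_n² β_n² n / 2). Then for every fixed u > 0, b_n^{-1} · P(exp(β_n √n Z) ≥ u^{1/α_n} g_n) → 1/u as n → ∞. -/
open Filter MeasureTheory
open scoped ProbabilityTheory

/-!
Put `a = α β √n`. The event is `Z ≥ v` with `v = a + log u / a`, so `v ∼ a` and
`v² / 2 = a² / 2 + log u + o(1)`; the claim therefore reduces to Mills' ratio
`P(Z ≥ v) ∼ e^{-v²/2} / (v √(2π))`. That follows by squeezing, since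
`-(x⁻¹ e^{-x²/2})` is an antiderivative of `(1 + x⁻²) e^{-x²/2}`, whence
`∫_v^∞ e^{-x²/2} ≤ e^{-v²/2} / v ≤ (1 + v⁻²) ∫_v^∞ e^{-x²/2}`.
-/

open Real Set Topology ProbabilityTheory

lemma hasDerivAt_neg_inv_mul_exp_neg_sq_div_two {x : ℝ} (hx : x ≠ 0) :
    HasDerivAt (fun x : ℝ => -(x⁻¹ * exp (-x ^ 2 / 2))) ((1 + x⁻¹ ^ 2) * exp (-x ^ 2 / 2)) x := by
  have hexp : HasDerivAt (fun x : ℝ => exp (-x ^ 2 / 2)) (-x * exp (-x ^ 2 / 2)) x := by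
    convert ((hasDerivAt_pow 2 x).fun_neg.div_const 2).exp using 1
    ring
  refine ((hasDerivAt_inv hx).mul hexp).fun_neg.congr_deriv ?_
  field_simp
  ring

lemma tendsto_neg_inv_mul_exp_neg_sq_div_two :
    Tendsto (fun x : ℝ => -(x⁻¹ * exp (-x ^ 2 / 2))) atTop (𝓝 0) := by
  have hexp : Tendsto (fun x : ℝ => exp (-x ^ 2 / 2)) atTop (𝓝 0) := by
    refine tendsto_exp_atBot.comp ?_
    simpa [neg_div] using tendsto_neg_atBot_iff.2
      ((tendsto_pow_atTop two_ne_zero).atTop_div_const (two_pos : (0 : ℝ) < 2))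
  simpa using (tendsto_inv_atTop_zero.mul hexp).neg

lemma integrableOn_one_add_inv_sq_mul_exp_neg_sq_div_two {v : ℝ} (hv : 0 < v) :
    IntegrableOn (fun x : ℝ => (1 + x⁻¹ ^ 2) * exp (-x ^ 2 / 2)) (Ioi v) :=
  integrableOn_Ioi_deriv_of_nonneg'
    (fun x hx => hasDerivAt_neg_inv_mul_exp_neg_sq_div_two (hv.trans_le hx).ne')
    (fun x _ => by positivity) tendsto_neg_inv_mul_exp_neg_sq_div_two

lemma integral_Ioi_one_add_inv_sq_mul_exp_neg_sq_div_two {v : ℝ} (hv : 0 < v) :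
    ∫ x in Ioi v, (1 + x⁻¹ ^ 2) * exp (-x ^ 2 / 2) = exp (-v ^ 2 / 2) / v := by
  rw [integral_Ioi_of_hasDerivAt_of_nonneg'
    (fun x hx => hasDerivAt_neg_inv_mul_exp_neg_sq_div_two (hv.trans_le hx).ne')
    (fun x _ => by positivity) tendsto_neg_inv_mul_exp_neg_sq_div_two]
  ring

lemma integrableOn_exp_neg_sq_div_two (s : Set ℝ) :
    IntegrableOn (fun x : ℝ => exp (-x ^ 2 / 2)) s := by
  have h := integrable_exp_neg_mul_sq (b := 1 / 2) (by norm_num)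
  refine (h.congr (ae_of_all _ fun x => ?_)).integrableOn
  ring_nf

lemma integral_Ioi_exp_neg_sq_div_two_le {v : ℝ} (hv : 0 < v) :
    ∫ x in Ioi v, exp (-x ^ 2 / 2) ≤ exp (-v ^ 2 / 2) / v := by
  rw [← integral_Ioi_one_add_inv_sq_mul_exp_neg_sq_div_two hv]
  refine setIntegral_mono_on (integrableOn_exp_neg_sq_div_two _)
    (integrableOn_one_add_inv_sq_mul_exp_neg_sq_div_two hv) measurableSet_Ioi fun x _ => ?_
  nlinarith [exp_nonneg (-x ^ 2 / 2), sq_nonneg x⁻¹]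

lemma le_integral_Ioi_exp_neg_sq_div_two {v : ℝ} (hv : 0 < v) :
    v / (v ^ 2 + 1) * exp (-v ^ 2 / 2) ≤ ∫ x in Ioi v, exp (-x ^ 2 / 2) := by
  have hbound : exp (-v ^ 2 / 2) / v ≤ (1 + v⁻¹ ^ 2) * ∫ x in Ioi v, exp (-x ^ 2 / 2) := by
    rw [← integral_Ioi_one_add_inv_sq_mul_exp_neg_sq_div_two hv, ← integral_const_mul]
    refine setIntegral_mono_on (integrableOn_one_add_inv_sq_mul_exp_neg_sq_div_two hv)
      ((integrableOn_exp_neg_sq_div_two _).const_mul _) measurableSet_Ioi fun x hx => ?_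
    have : x⁻¹ ^ 2 ≤ v⁻¹ ^ 2 :=
      pow_le_pow_left₀ (inv_nonneg.2 (hv.trans hx).le) (inv_anti₀ hv hx.le) 2
    gcongr
  calc v / (v ^ 2 + 1) * exp (-v ^ 2 / 2)
      = v ^ 2 / (v ^ 2 + 1) * (exp (-v ^ 2 / 2) / v) := by field_simp
    _ ≤ v ^ 2 / (v ^ 2 + 1) * ((1 + v⁻¹ ^ 2) * ∫ x in Ioi v, exp (-x ^ 2 / 2)) := by gcongr
    _ = ∫ x in Ioi v, exp (-x ^ 2 / 2) := by field_simp

lemma tendsto_mul_exp_mul_integral_Ioi_exp_neg_sq_div_two :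
    Tendsto (fun v : ℝ => v * exp (v ^ 2 / 2) * ∫ x in Ioi v, exp (-x ^ 2 / 2)) atTop (𝓝 1) := by
  have hlower : Tendsto (fun v : ℝ => v ^ 2 / (v ^ 2 + 1)) atTop (𝓝 1) := by
    have h := (tendsto_inv_atTop_zero.comp (tendsto_pow_atTop (two_ne_zero (α := ℕ)))).const_add 1
      |>.inv₀ (by norm_num : (1 : ℝ) + 0 ≠ 0)
    refine (by simpa using h : Tendsto (fun v : ℝ => (1 + (v ^ 2)⁻¹)⁻¹) atTop (𝓝 1)).congr' ?_
    filter_upwards [eventually_gt_atTop 0] with v hv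
    field_simp
  have hexp (v : ℝ) : exp (v ^ 2 / 2) * exp (-v ^ 2 / 2) = 1 := by
    rw [← exp_add, neg_div, add_neg_cancel, exp_zero]
  refine tendsto_of_tendsto_of_tendsto_of_le_of_le' hlower tendsto_const_nhds ?_ ?_ <;>
    filter_upwards [eventually_gt_atTop 0] with v hv
  · calc v ^ 2 / (v ^ 2 + 1)
        = v * exp (v ^ 2 / 2) * (v / (v ^ 2 + 1) * exp (-v ^ 2 / 2)) := by
          rw [← mul_one (v ^ 2 / (v ^ 2 + 1)), ← hexp v]; ring
      _ ≤ _ := by gcongr; exact le_integral_Ioi_exp_neg_sq_div_two hv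
  · calc v * exp (v ^ 2 / 2) * ∫ x in Ioi v, exp (-x ^ 2 / 2)
        ≤ v * exp (v ^ 2 / 2) * (exp (-v ^ 2 / 2) / v) := by
          gcongr; exact integral_Ioi_exp_neg_sq_div_two_le hv
      _ = 1 := by rw [← hexp v]; field_simp

lemma gaussianReal_Ici_toReal (v : ℝ) :
    (gaussianReal 0 1 (Ici v)).toReal = (√(2 * π))⁻¹ * ∫ x in Ioi v, exp (-x ^ 2 / 2) := by
  rw [gaussianReal_apply_eq_integral 0 one_ne_zero, ENNReal.toReal_ofReal
    (setIntegral_nonneg measurableSet_Ici fun x _ => gaussianPDFReal_nonneg 0 1 x),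
    integral_Ici_eq_integral_Ioi, ← integral_const_mul]
  simp [gaussianPDFReal]

lemma tendsto_mul_exp_mul_gaussianReal_Ici :
    Tendsto (fun v : ℝ => v * √(2 * π) * exp (v ^ 2 / 2) * (gaussianReal 0 1 (Ici v)).toReal)
      atTop (𝓝 1) := by
  refine tendsto_mul_exp_mul_integral_Ioi_exp_neg_sq_div_two.congr fun v => ?_
  have : √(2 * π) ≠ 0 := by positivity
  rw [gaussianReal_Ici_toReal]
  field_simp

lemma tendsto_mul_exp_mul_gaussianReal_Ici_add_div {ι : Type*} {l : Filter ι} {a : ι → ℝ}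
    (ha : Tendsto a l atTop) (c : ℝ) :
    Tendsto (fun i => a i * √(2 * π) * exp (a i ^ 2 / 2) *
      (gaussianReal 0 1 (Ici (a i + c / a i))).toReal) l (𝓝 (exp (-c))) := by
  set v := fun i => a i + c / a i
  have hinv : Tendsto (fun i => (a i)⁻¹) l (𝓝 0) := tendsto_inv_atTop_zero.comp ha
  have hv : Tendsto v l atTop := by
    simpa [v, div_eq_mul_inv] using ha.atTop_add (hinv.const_mul c)
  have hratio : Tendsto (fun i => (1 + c * (a i)⁻¹ ^ 2)⁻¹) l (𝓝 1) := by
    simpa using ((hinv.pow 2).const_mul c |>.const_add 1).inv₀ (by norm_num)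
  have hcorr : Tendsto (fun i => exp (-c - c ^ 2 / 2 * (a i)⁻¹ ^ 2)) l (𝓝 (exp (-c))) := by
    simpa using (((hinv.pow 2).const_mul (c ^ 2 / 2)).const_sub (-c)).rexp
  have h := ((tendsto_mul_exp_mul_gaussianReal_Ici.comp hv).mul hratio).mul hcorr
  rw [one_mul, one_mul] at h
  refine h.congr' ?_
  filter_upwards [ha.eventually_gt_atTop 0, hv.eventually_gt_atTop 0] with i hai hvi
  have hfactor : v i * (1 + c * (a i)⁻¹ ^ 2)⁻¹ = a i := by
    have hne : a i ^ 2 + c ≠ 0 := by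
      rw [show a i ^ 2 + c = a i * v i by simp only [v]; field_simp]
      positivity
    simp only [v]
    field_simp
  have hexpo : v i ^ 2 / 2 + (-c - c ^ 2 / 2 * (a i)⁻¹ ^ 2) = a i ^ 2 / 2 := by
    simp only [v]; field_simp; ring
  calc v i * √(2 * π) * exp (v i ^ 2 / 2) * (gaussianReal 0 1 (Ici (v i))).toReal *
        (1 + c * (a i)⁻¹ ^ 2)⁻¹ * exp (-c - c ^ 2 / 2 * (a i)⁻¹ ^ 2)
      = v i * (1 + c * (a i)⁻¹ ^ 2)⁻¹ * √(2 * π) *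
          exp (v i ^ 2 / 2 + (-c - c ^ 2 / 2 * (a i)⁻¹ ^ 2)) *
          (gaussianReal 0 1 (Ici (v i))).toReal := by rw [exp_add]; ring
    _ = _ := by rw [hexpo, hfactor]

lemma setOf_rpow_mul_exp_le_exp_eq_Ici {u s : ℝ} (hu : 0 < u) (hs : 0 < s) (t : ℝ) :
    {z : ℝ | u ^ (1 / t) * exp (t * s ^ 2) ≤ exp (s * z)} = Ici (t * s + log u / (t * s)) := by
  ext z
  have hkey : log u * (1 / t) + t * s ^ 2 = s * (t * s + log u / (t * s)) := by
    rw [mul_add, div_mul_eq_div_div, mul_div_cancel₀ _ hs.ne']; ring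
  rw [mem_ofPred_eq, mem_Ici, rpow_def_of_pos hu, ← exp_add, exp_le_exp, hkey,
    mul_le_mul_iff_of_pos_left hs]

theorem rem_condition_A_limit_general (α β : ℕ → ℝ) (hβ : ∀ n, 0 < β n)
    (hdiv : Tendsto (fun n => α n * β n * Real.sqrt n) atTop atTop) :
    ∀ u : ℝ, 0 < u →
      Tendsto (fun n =>
          (α n * β n * Real.sqrt (2 * Real.pi * n) *
              Real.exp (α n ^ 2 * β n ^ 2 * n / 2)) *
            ((ProbabilityTheory.gaussianReal 0 1)
                {z : ℝ | u ^ (1 / α n) * Real.exp (α n * β n ^ 2 * n) ≤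
                  Real.exp (β n * Real.sqrt n * z)}).toReal)
        atTop (nhds (1 / u)) := by
  intro u hu
  have h := tendsto_mul_exp_mul_gaussianReal_Ici_add_div hdiv (log u)
  rw [exp_neg, exp_log hu, ← one_div] at h
  refine h.congr' ?_
  filter_upwards [eventually_gt_atTop 0] with n hn
  have hsqrt : √(n : ℝ) ^ 2 = n := sq_sqrt n.cast_nonneg
  have hs : 0 < β n * √n := mul_pos (hβ n) (sqrt_pos.2 (Nat.cast_pos.2 hn))
  rw [show α n * β n ^ 2 * n = α n * (β n * √n) ^ 2 by rw [mul_pow, hsqrt]; ring,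
    setOf_rpow_mul_exp_le_exp_eq_Ici hu hs, sqrt_mul (by positivity : 0 ≤ 2 * π) n,
    show α n ^ 2 * β n ^ 2 * n = (α n * β n * √n) ^ 2 by rw [mul_pow, mul_pow, hsqrt]]
  simp only [← mul_assoc]
  ring

/-- Gaussian deep-trap tail asymptotics (Condition A for the REM):
with `g_n = exp(α_n β_n² n)` and `b_n⁻¹ = α_n β_n √(2πn) exp(α_n² β_n² n/2)`,
for every `u > 0`, `b_n⁻¹ P(exp(β_n √n Z) ≥ u^{1/α_n} g_n) → 1/u`. -/
theorem rem_condition_A_limit (α β : ℕ → ℝ) (hα : ∀ n, 0 < α n) (hβ : ∀ n, 0 < β n)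
    (hdiv : Tendsto (fun n => α n * β n * Real.sqrt n) atTop atTop) :
    ∀ u : ℝ, 0 < u →
      Tendsto (fun n =>
          (α n * β n * Real.sqrt (2 * Real.pi * n) *
              Real.exp (α n ^ 2 * β n ^ 2 * n / 2)) *
            ((ProbabilityTheory.gaussianReal 0 1)
                {z : ℝ | u ^ (1 / α n) * Real.exp (α n * β n ^ 2 * n) ≤
                  Real.exp (β n * Real.sqrt n * z)}).toReal)
        atTop (nhds (1 / u)) :=
  rem_condition_A_limit_general α β hβ hdiv
end

section
/- Let Z be a standard Gaussian. With the notation of the previous statement (g_n = exp(α_n β_n² n), b_n^{-1} = α_n β_n √(2πn) exp(α_n²β_n²n/2)), there exists a constant C > 0 such that for all n, all u > 0 and all d > 0, P(exp(β_n √n Z) ≥ u^{1/α_n} d g_n) ≤ C b_n / (u d^{α_n}). -/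
/-!
Completing the square, `φ(z) = φ(z - x) e^{x²/2 - xz} ≤ (2π)^{-1/2} e^{x²/2 - xz}` for every `x`,
and integrating over `z ≥ v` gives `P(Z ≥ v) ≤ e^{x²/2 - xv} / (x √(2π))` for `x > 0`. The event
is `{Z ≥ v}` for `v = log (u^{1/α} d g_n) / (β √n)`, and the choice `x = α β √n` turns the right
side into exactly `b_n / (u d^α)`, so `C = 1` works.
-/

open MeasureTheory ProbabilityTheory Real Set

lemma gaussianPDFReal_zero_one_le (x z : ℝ) :
    gaussianPDFReal 0 1 z ≤ (√(2 * π))⁻¹ * exp (x ^ 2 / 2) * exp (-x * z) := by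
  simp only [gaussianPDFReal_def, NNReal.coe_one, mul_one, sub_zero]
  rw [mul_assoc, ← exp_add]
  gcongr
  nlinarith [sq_nonneg (z - x)]

lemma gaussianReal_Ici_le {x : ℝ} (hx : 0 < x) (v : ℝ) :
    gaussianReal 0 1 (Ici v) ≤ ENNReal.ofReal (exp (x ^ 2 / 2 - x * v) / (√(2 * π) * x)) := by
  rw [gaussianReal_apply_eq_integral 0 one_ne_zero, integral_Ici_eq_integral_Ioi]
  gcongr
  calc ∫ z in Ioi v, gaussianPDFReal 0 1 z
      ≤ ∫ z in Ioi v, (√(2 * π))⁻¹ * exp (x ^ 2 / 2) * exp (-x * z) :=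
        setIntegral_mono_on (integrable_gaussianPDFReal 0 1).integrableOn
          ((integrableOn_exp_mul_Ioi (neg_lt_zero.2 hx) v).const_mul _) measurableSet_Ioi
          fun z _ => gaussianPDFReal_zero_one_le x z
    _ = exp (x ^ 2 / 2 - x * v) / (√(2 * π) * x) := by
        rw [integral_const_mul, integral_exp_mul_Ioi (neg_lt_zero.2 hx), sub_eq_add_neg,
          exp_add]
        field_simp

lemma setOf_le_exp_mul_eq_Ici {c σ : ℝ} (hc : 0 < c) (hσ : 0 < σ) :
    {z : ℝ | c ≤ exp (σ * z)} = Ici (log c / σ) := by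
  ext z
  rw [mem_ofPred_eq, mem_Ici, ← log_le_iff_le_exp hc, div_le_iff₀' hσ]

lemma gaussianReal_exp_mul_tail_le {a b s u d : ℝ} (ha : 0 < a) (hb : 0 < b) (hs : 0 < s)
    (hu : 0 < u) (hd : 0 < d) :
    gaussianReal 0 1 {z | u ^ (1 / a) * d * exp (a * b ^ 2 * s ^ 2) ≤ exp (b * s * z)}
      ≤ ENNReal.ofReal ((a * b * (√(2 * π) * s) * exp (a ^ 2 * b ^ 2 * s ^ 2 / 2))⁻¹ /
          (u * d ^ a)) := by
  have hc : 0 < u ^ (1 / a) * d * exp (a * b ^ 2 * s ^ 2) := by positivity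
  rw [setOf_le_exp_mul_eq_Ici hc (by positivity)]
  refine (gaussianReal_Ici_le (x := a * b * s) (by positivity) _).trans_eq
    (congrArg ENNReal.ofReal ?_)
  have hexponent : (a * b * s) ^ 2 / 2 - a * b * s * (log (u ^ (1 / a) * d *
      exp (a * b ^ 2 * s ^ 2)) / (b * s)) = -(a ^ 2 * b ^ 2 * s ^ 2 / 2) - (log u + log d * a) := by
    rw [log_mul (by positivity) (exp_pos _).ne', log_mul (by positivity) hd.ne', log_rpow hu,
      log_exp]
    field_simp
    ring
  rw [hexponent, exp_sub, exp_add, exp_log hu, ← rpow_def_of_pos hd, exp_neg]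
  field_simp

/-- Uniform Gaussian deep-trap tail bound (Condition A, second part, for the REM):
there is a constant `C > 0` such that for all `n ≥ 1`, `u > 0` and `d > 0`,
`P(exp(β_n √n Z) ≥ u^{1/α_n} d g_n) ≤ C b_n / (u d^{α_n})`, where
`g_n = exp(α_n β_n² n)` and `b_n = (α_n β_n √(2πn) exp(α_n² β_n² n/2))⁻¹`. -/
theorem rem_condition_A_bound (α β : ℕ → ℝ) (hα : ∀ n, 0 < α n) (hβ : ∀ n, 0 < β n) :
    ∃ C : ℝ, 0 < C ∧ ∀ n : ℕ, 0 < n → ∀ u d : ℝ, 0 < u → 0 < d →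
      (ProbabilityTheory.gaussianReal 0 1)
          {z : ℝ | u ^ (1 / α n) * d * Real.exp (α n * β n ^ 2 * n) ≤
            Real.exp (β n * Real.sqrt n * z)}
        ≤ ENNReal.ofReal (C *
            (α n * β n * Real.sqrt (2 * Real.pi * n) *
                Real.exp (α n ^ 2 * β n ^ 2 * n / 2))⁻¹ / (u * d ^ α n)) := by
  refine ⟨1, one_pos, fun n hn u d hu hd => ?_⟩
  have := gaussianReal_exp_mul_tail_le (hα n) (hβ n) (sqrt_pos.2 (Nat.cast_pos.2 hn)) hu hd
  rw [sq_sqrt n.cast_nonneg] at this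
  rwa [one_mul, sqrt_mul (by positivity)]
end

section
/- Let α ∈ (0,1), λ > 0, D > 0. Then Σ_{j=1}^∞ exp(-2^{jα} λ D) ≤ exp(-2^α λ D) + exp(-2^α λ D) / (α (log 2) 2^α λ D). -/
/-!
Since `2 ^ (jα) = exp (jα log 2) ≥ 1 + jα log 2`, the `j`-th term is at most
`exp (-2^α λ D) · q ^ j` with `q = exp (-α log 2 · 2^α λ D)`, and the geometric series is bounded
through `1 / (1 - exp (-β)) ≤ 1 + 1 / β`, itself a form of `1 + β ≤ exp β`.
-/

namespace Real

theorem one_add_mul_log_le_rpow {a : ℝ} (ha : 0 < a) (x : ℝ) : 1 + x * log a ≤ a ^ x := by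
  rw [rpow_def_of_pos ha, mul_comm x]
  linarith [add_one_le_exp (log a * x)]

theorem exp_neg_rpow_succ_mul_le {a c : ℝ} (ha : 0 < a) (hc : 0 ≤ c) (α : ℝ) (j : ℕ) :
    exp (-(a ^ (((j : ℝ) + 1) * α) * c)) ≤
      exp (-(a ^ α * c)) * exp (-(α * log a * (a ^ α * c))) ^ j := by
  rw [← exp_nat_mul, ← exp_add, exp_le_exp]
  have hsplit : a ^ (((j : ℝ) + 1) * α) = a ^ α * a ^ ((j : ℝ) * α) := by
    rw [← rpow_add ha]; ring_nf
  have hlin := one_add_mul_log_le_rpow ha ((j : ℝ) * α)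
  have hscale : 0 ≤ a ^ α * c := mul_nonneg (rpow_nonneg ha.le α) hc
  rw [hsplit]
  nlinarith [mul_le_mul_of_nonneg_left hlin hscale]

theorem inv_one_sub_exp_neg_le {β : ℝ} (hβ : 0 < β) : (1 - exp (-β))⁻¹ ≤ 1 + β⁻¹ := by
  have hle : exp (-β) ≤ (1 + β)⁻¹ := by
    rw [exp_neg]
    exact inv_anti₀ (by positivity) (by linarith [add_one_le_exp β])
  have hpos : 0 < 1 - (1 + β)⁻¹ := sub_pos.2 (inv_lt_one_of_one_lt₀ (by linarith))
  calc (1 - exp (-β))⁻¹ ≤ (1 - (1 + β)⁻¹)⁻¹ := inv_anti₀ hpos (by linarith)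
    _ = 1 + β⁻¹ := by
      rw [inv_eq_one_div (1 + β), one_sub_div (by positivity), add_sub_cancel_left, inv_div,
        add_div, div_self hβ.ne', one_div, add_comm]

end Real

theorem tsum_le_of_le_mul_exp_neg_pow {f : ℕ → ℝ} {C β : ℝ} (hβ : 0 < β)
    (hf0 : ∀ j, 0 ≤ f j) (hf : ∀ j, f j ≤ C * Real.exp (-β) ^ j) :
    ∑' j, f j ≤ C + C / β := by
  have hq0 : 0 ≤ Real.exp (-β) := (Real.exp_pos _).le
  have hq1 : Real.exp (-β) < 1 := Real.exp_lt_one_iff.2 (neg_lt_zero.2 hβ)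
  have hgeom := (summable_geometric_of_lt_one hq0 hq1).mul_left C
  have hC : 0 ≤ C := le_trans (hf0 0) (by simpa using hf 0)
  calc ∑' j, f j ≤ ∑' j, C * Real.exp (-β) ^ j :=
        (hgeom.of_nonneg_of_le hf0 hf).tsum_le_tsum hf hgeom
    _ = C * (1 - Real.exp (-β))⁻¹ := by rw [tsum_mul_left, tsum_geometric_of_lt_one hq0 hq1]
    _ ≤ C * (1 + β⁻¹) := mul_le_mul_of_nonneg_left (Real.inv_one_sub_exp_neg_le hβ) hC
    _ = C + C / β := by ring

theorem sum_exp_double_exp_bound_general (α lam D : ℝ) (hα0 : 0 < α)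
    (hlam : 0 < lam) (hD : 0 < D) :
    ∑' j : ℕ, Real.exp (-((2:ℝ) ^ (((j : ℝ) + 1) * α) * (lam * D))) ≤
      Real.exp (-((2:ℝ) ^ α * (lam * D))) +
        Real.exp (-((2:ℝ) ^ α * (lam * D))) /
          (α * Real.log 2 * (2:ℝ) ^ α * lam * D) := by
  have hc : 0 < lam * D := mul_pos hlam hD
  have hβ : 0 < α * Real.log 2 * ((2:ℝ) ^ α * (lam * D)) := by
    have := Real.log_pos one_lt_two
    positivity
  have hbound := tsum_le_of_le_mul_exp_neg_pow hβ (fun j => (Real.exp_pos _).le)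
    (Real.exp_neg_rpow_succ_mul_le two_pos hc.le α)
  convert hbound using 3
  ring

/-- Integral-comparison bound for the series `Σ_{j≥1} exp(-2^{jα} λ D)`:
it is at most `exp(-2^α λ D) + exp(-2^α λ D)/(α (log 2) 2^α λ D)`. -/
theorem sum_exp_double_exp_bound (α lam D : ℝ) (hα0 : 0 < α) (hα1 : α < 1)
    (hlam : 0 < lam) (hD : 0 < D) :
    ∑' j : ℕ, Real.exp (-((2:ℝ) ^ (((j : ℝ) + 1) * α) * (lam * D))) ≤
      Real.exp (-((2:ℝ) ^ α * (lam * D))) +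
        Real.exp (-((2:ℝ) ^ α * (lam * D))) /
          (α * Real.log 2 * (2:ℝ) ^ α * lam * D) :=
  sum_exp_double_exp_bound_general α lam D hα0 hlam hD
end
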